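/- Theorem 1 (task decomposability): Suppose R is a reward machine over Σ, Σ₁,...,Σ_N are subsets with ∪ᵢ Σᵢ = Σ, R₁,...,R_N are the projections of R onto the Σᵢ, and R is bisimilar to the parallel composition R₁ ∥ ... ∥ R_N. Then for any event sequence ξ ∈ Σ*, R(ξ) = 1 if and only if Rᵢ(Pᵢ(ξ)) = 1 for all i = 1,...,N. -/

import Mathlib

structure RMA (E : Type) where
  U : Type
  finite : Finite U
  alph : Set E
  init : U
  trans : U → E → Option U
  F : Set U

def Bisim {E : Type} (R1 R2 : RMA E) : Prop :=
  ∃ r : R1.U → R2.U → Prop,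
    r R1.init R2.init ∧
    ∀ u1 u2, r u1 u2 →
      (u1 ∈ R1.F ↔ u2 ∈ R2.F) ∧
      (∀ e u1', R1.trans u1 e = some u1' →
        ∃ u2', R2.trans u2 e = some u2' ∧ r u1' u2') ∧
      (∀ e u2', R2.trans u2 e = some u2' →
        ∃ u1', R1.trans u1 e = some u1' ∧ r u1' u2')

def ProjConds {U E : Type} (δ : U → E → Option U) (Sigi : Set E)
    (s : Setoid U) : Prop :=
  (∀ u1 u2 e, δ u1 e = some u2 → e ∉ Sigi → s.r u1 u2) ∧
  (∀ u1 u1' u2 u2' e, s.r u1 u1' → e ∈ Sigi →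
    δ u1 e = some u2 → δ u1' e = some u2' → s.r u2 u2')

/-- The smallest equivalence relation `∼ᵢ` defining the RM projection. -/
def projSetoid {U E : Type} (δ : U → E → Option U) (Sigi : Set E) :
    Setoid U :=
  sInf {s | ProjConds δ Sigi s}

open Classical in
/-- The projection of the reward machine `R` onto the local event set
`Sigi`: states are equivalence classes of `∼ᵢ`, a local event moves a
class to the (unique) class of successors, and final classes are those
containing a final state of `R`. -/
noncomputable def projRM {E : Type} (R : RMA E) (Sigi : Set E) : RMA E where
  U := Quotient (projSetoid R.trans Sigi)
  finite := by have := R.finite; infer_instance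
  alph := Sigi
  init := Quotient.mk (projSetoid R.trans Sigi) R.init
  trans := fun q e =>
    if h : e ∈ Sigi ∧ ∃ u u', Quotient.mk (projSetoid R.trans Sigi) u = q ∧
        R.trans u e = some u' then
      some (Quotient.mk (projSetoid R.trans Sigi) h.2.choose_spec.choose)
    else none
  F := {q | ∃ u ∈ R.F, Quotient.mk (projSetoid R.trans Sigi) u = q}

def runRM {U E : Type} (δ : U → E → Option U) : U → List E → Option U
  | u, [] => some u
  | u, e :: ξ => (δ u e).bind (fun u' => runRM δ u' ξ)

def natProj {α : Type*} (Sig : Set α) [DecidablePred (· ∈ Sig)] : List α → List α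
  | [] => []
  | e :: ξ => if e ∈ Sig then e :: natProj Sig ξ else natProj Sig ξ

/-- `R(ξ) = 1`: the run of `R` on `ξ` is defined and reaches a final state. -/
def Accept {E : Type} (R : RMA E) (ξ : List E) : Prop :=
  ∃ u, runRM R.trans R.init ξ = some u ∧ u ∈ R.F

open Classical in
/-- `N`-ary parallel composition. -/
noncomputable def parN {E : Type} {N : ℕ} (R : Fin N → RMA E) : RMA E where
  U := ∀ i, (R i).U
  finite := by have := fun i => (R i).finite; infer_instance
  alph := ⋃ i, (R i).alph
  init := fun i => (R i).init
  trans := fun u e =>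
    if (∃ i, e ∈ (R i).alph) ∧
        (∀ i, e ∈ (R i).alph → ((R i).trans (u i) e).isSome) then
      some (fun i =>
        if e ∈ (R i).alph then ((R i).trans (u i) e).getD (u i) else u i)
    else none
  F := {u | ∀ i, u i ∈ (R i).F}

/-!
Bisimilar reward machines accept the same event sequences, so it suffices to understand acceptance
by the parallel composition `R₁ ∥ ⋯ ∥ R_N`. A run of the composition on `ξ` is exactly a tuple of
runs of the components `Rᵢ` on the projections `Pᵢ(ξ)`, provided every event of `ξ` is local to
some `Rᵢ`; for `ξ ∈ Σ*` this holds because the `Σᵢ` cover `Σ`.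
-/

section Runs

variable {U E : Type} (δ : U → E → Option U)

lemma runRM_cons_eq_some {u v : U} {e : E} {ξ : List E} :
    runRM δ u (e :: ξ) = some v ↔ ∃ w, δ u e = some w ∧ runRM δ w ξ = some v :=
  Option.bind_eq_some_iff

lemma runRM_append (u : U) (ξ ζ : List E) :
    runRM δ u (ξ ++ ζ) = (runRM δ u ξ).bind (runRM δ · ζ) := by
  induction ξ generalizing u with
  | nil => rfl
  | cons e ξ ih => simp only [List.cons_append, runRM, ih, Option.bind_assoc]

lemma runRM_natProj_singleton (S : Set E) [DecidablePred (· ∈ S)] (u : U) (e : E) :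
    runRM δ u (natProj S [e]) = if e ∈ S then δ u e else some u := by
  by_cases he : e ∈ S <;> simp [natProj, runRM, he]

end Runs

lemma natProj_cons {α : Type*} (S : Set α) [DecidablePred (· ∈ S)] (e : α) (ξ : List α) :
    natProj S (e :: ξ) = natProj S [e] ++ natProj S ξ := by
  by_cases he : e ∈ S <;> simp [natProj, he]

theorem Bisim.symm {E : Type} {R₁ R₂ : RMA E} (h : Bisim R₁ R₂) : Bisim R₂ R₁ := by
  obtain ⟨r, hinit, hstep⟩ := h
  refine ⟨flip r, hinit, fun u₂ u₁ hr => ?_⟩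
  obtain ⟨hF, hforth, hback⟩ := hstep u₁ u₂ hr
  exact ⟨hF.symm, hback, hforth⟩

theorem Bisim.accept {E : Type} {R₁ R₂ : RMA E} (h : Bisim R₁ R₂) {ξ : List E}
    (hacc : Accept R₁ ξ) : Accept R₂ ξ := by
  obtain ⟨r, hinit, hstep⟩ := h
  obtain ⟨v₁, hrun, hF⟩ := hacc
  suffices ∀ ξ u₁ u₂ v₁, r u₁ u₂ → runRM R₁.trans u₁ ξ = some v₁ → v₁ ∈ R₁.F →
      ∃ v₂, runRM R₂.trans u₂ ξ = some v₂ ∧ v₂ ∈ R₂.F from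
    this ξ _ _ v₁ hinit hrun hF
  intro ξ
  induction ξ with
  | nil =>
    rintro u₁ u₂ v₁ hr ⟨⟩ hF
    exact ⟨u₂, rfl, ((hstep _ _ hr).1).mp hF⟩
  | cons e ξ ih =>
    intro u₁ u₂ v₁ hr hrun hF
    obtain ⟨w₁, hw₁, hrun⟩ := (runRM_cons_eq_some _).mp hrun
    obtain ⟨w₂, hw₂, hrw⟩ := (hstep _ _ hr).2.1 e w₁ hw₁
    obtain ⟨v₂, hv₂, hF⟩ := ih w₁ w₂ v₁ hrw hrun hF
    exact ⟨v₂, (runRM_cons_eq_some _).mpr ⟨w₂, hw₂, hv₂⟩, hF⟩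

theorem Bisim.accept_iff {E : Type} {R₁ R₂ : RMA E} (h : Bisim R₁ R₂) (ξ : List E) :
    Accept R₁ ξ ↔ Accept R₂ ξ :=
  ⟨h.accept, h.symm.accept⟩

section Parallel

open Classical

variable {E : Type} {N : ℕ} (Rs : Fin N → RMA E)

/-- Phrased through `natProj _ [e]` so that steps glue to component runs on projections via
`natProj_cons` and `runRM_append`. -/
lemma parN_trans_eq_some (u w : (parN Rs).U) (e : E) :
    (parN Rs).trans u e = some w ↔ (∃ i, e ∈ (Rs i).alph) ∧
      ∀ i, runRM (Rs i).trans (u i) (natProj (Rs i).alph [e]) = some (w i) := by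
  simp only [parN, runRM_natProj_singleton]
  split_ifs with h
  · rw [and_iff_right h.1]
    refine Option.some_inj.trans (funext_iff.trans (forall_congr' fun i => ?_))
    by_cases hi : e ∈ (Rs i).alph
    · obtain ⟨w', hw'⟩ := Option.isSome_iff_exists.mp (h.2 i hi)
      simp [hi, hw']
    · simp [hi]
  · refine iff_of_false not_false fun ⟨he, hstep⟩ => h ⟨he, fun i hi => ?_⟩
    simpa [hi] using congrArg Option.isSome (hstep i)

lemma runRM_parN_eq_some (ξ : List E) (u v : (parN Rs).U) :
    runRM (parN Rs).trans u ξ = some v ↔ (∀ e ∈ ξ, ∃ i, e ∈ (Rs i).alph) ∧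
      ∀ i, runRM (Rs i).trans (u i) (natProj (Rs i).alph ξ) = some (v i) := by
  induction ξ generalizing u with
  | nil =>
    simp only [runRM, natProj, Option.some_inj, List.not_mem_nil, IsEmpty.forall_iff,
      implies_true, true_and]
    exact funext_iff
  | cons e ξ ih =>
    have hcomp : ∀ i, natProj (Rs i).alph (e :: ξ) =
        natProj (Rs i).alph [e] ++ natProj (Rs i).alph ξ := fun i => natProj_cons _ e ξ
    simp only [runRM_cons_eq_some, parN_trans_eq_some, ih, List.forall_mem_cons, hcomp,
      runRM_append, Option.bind_eq_some_iff]
    rw [Classical.skolem]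
    simp only [forall_and]
    exact ⟨fun ⟨w, ⟨he, hstep⟩, hξ, hrun⟩ => ⟨⟨he, hξ⟩, w, hstep, hrun⟩,
      fun ⟨⟨he, hξ⟩, w, hstep, hrun⟩ => ⟨w, ⟨he, hstep⟩, hξ, hrun⟩⟩

lemma accept_parN_iff (ξ : List E) :
    Accept (parN Rs) ξ ↔ (∀ e ∈ ξ, ∃ i, e ∈ (Rs i).alph) ∧
      ∀ i, Accept (Rs i) (natProj (Rs i).alph ξ) := by
  simp only [Accept, runRM_parN_eq_some, Classical.skolem, forall_and]
  exact ⟨fun ⟨v, ⟨hcov, hrun⟩, hF⟩ => ⟨hcov, v, hrun, hF⟩,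
    fun ⟨hcov, v, hrun, hF⟩ => ⟨v, ⟨hcov, hrun⟩, hF⟩⟩

end Parallel

open Classical in
/-- Theorem 1 (task decomposability): if `∪ᵢ Σᵢ = Σ` and `R` is bisimilar
to the parallel composition of its projections `R₁, ..., R_N`, then an
event sequence `ξ ∈ Σ*` is accepted by `R` iff every projection `Rᵢ`
accepts the natural projection `Pᵢ(ξ)`. -/
theorem task_decomposability {E : Type} (R : RMA E) {N : ℕ}
    (Sigs : Fin N → Set E)
    (hcover : (⋃ i, Sigs i) = R.alph)
    (hbisim : Bisim R (parN (fun i => projRM R (Sigs i))))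
    (ξ : List E) (hξ : ∀ e ∈ ξ, e ∈ R.alph) :
    Accept R ξ ↔ ∀ i, Accept (projRM R (Sigs i)) (natProj (Sigs i) ξ) := by
  rw [hbisim.accept_iff, accept_parN_iff, and_iff_right]
  · rfl
  · intro e he
    exact Set.mem_iUnion.mp (hcover ▸ hξ e he)
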